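/- Let W denote an irreducible T-module. Then for 0 ≤ i ≤ D: P(E_i W) = E*_i W, P(E*_i W) = E^ε_i W, and P(E^ε_i W) = E_i W. -/

import Mathlib

noncomputable section

open Matrix Finset

/-- Vertex set of the hypercube `Q_D`: binary strings of length `D`. -/
abbrev Vtx (D : ℕ) := Fin D → Bool

/-- Hamming weight of a vertex, i.e. its distance to the fixed vertex `x = (0,...,0)`. -/
def wt {D : ℕ} (y : Vtx D) : ℕ := (Finset.univ.filter fun k => y k = true).card

/-- The adjacency matrix of the hypercube `Q_D`: `A_{yz} = 1` iff `y,z` differ in exactly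
one coordinate. -/
def adjMat (D : ℕ) : Matrix (Vtx D) (Vtx D) ℂ :=
  fun y z => if (Finset.univ.filter fun k => y k ≠ z k).card = 1 then 1 else 0

/-- The dual adjacency matrix of `Q_D` with respect to `x = (0,...,0)`: the diagonal
matrix with `(y,y)`-entry `D - 2·wt(y)`. -/
def dualAdjMat (D : ℕ) : Matrix (Vtx D) (Vtx D) ℂ :=
  Matrix.diagonal fun y => (D : ℂ) - 2 * (wt y : ℂ)

/-- The imaginary adjacency matrix `Aᵉ = -i(AA* - A*A)/2`. -/
def imagAdjMat (D : ℕ) : Matrix (Vtx D) (Vtx D) ℂ :=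
  (-Complex.I / 2) • (adjMat D * dualAdjMat D - dualAdjMat D * adjMat D)

/-- The 2×2 matrix `P₁` with entries `(P₁)₀₀ = 1`, `(P₁)₀₁ = 1`, `(P₁)₁₀ = -i`,
`(P₁)₁₁ = i`. -/
def P1 : Bool → Bool → ℂ
  | false, false => 1
  | false, true  => 1
  | true,  false => -Complex.I
  | true,  true  => Complex.I

/-- The D-fold Kronecker power `P = P₁^{⊗D}`, i.e. `P_{yz} = ∏_k (P₁)_{y_k z_k}`. -/
def Pmat (D : ℕ) : Matrix (Vtx D) (Vtx D) ℂ :=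
  fun y z => ∏ k : Fin D, P1 (y k) (z k)

/-- The eigenvalues `θ_j = D - 2j`. -/
def theta (D j : ℕ) : ℂ := (D : ℂ) - 2 * (j : ℂ)

/-- The `i`-th primitive idempotent `E_i = ∏_{0 ≤ j ≤ D, j ≠ i} (A - θ_j I)/(θ_i - θ_j)`. -/
def Emat (D i : ℕ) : Matrix (Vtx D) (Vtx D) ℂ :=
  Polynomial.aeval (adjMat D)
    (∏ j ∈ (Finset.range (D + 1)).erase i,
      Polynomial.C ((theta D i - theta D j)⁻¹) * (Polynomial.X - Polynomial.C (theta D j)))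

/-- The `i`-th dual idempotent `E*_i`: diagonal with `(y,y)`-entry `1` if `wt(y) = i`. -/
def EstarMat (D i : ℕ) : Matrix (Vtx D) (Vtx D) ℂ :=
  Matrix.diagonal fun y => if wt y = i then 1 else 0

/-- The `i`-th imaginary idempotent `Eᵉ_i = P⁻¹ E_i P`. -/
def EepsMat (D i : ℕ) : Matrix (Vtx D) (Vtx D) ℂ :=
  (Pmat D)⁻¹ * Emat D i * Pmat D

/-- `W` is a `T`-module: a subspace of `ℂ^X` invariant under `A` and `A*`. -/
def IsTMod (D : ℕ) (W : Submodule ℂ (Vtx D → ℂ)) : Prop :=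
  (∀ w ∈ W, (adjMat D).mulVec w ∈ W) ∧ (∀ w ∈ W, (dualAdjMat D).mulVec w ∈ W)

/-- `W` is an irreducible `T`-module. -/
def IsIrredTMod (D : ℕ) (W : Submodule ℂ (Vtx D → ℂ)) : Prop :=
  IsTMod D W ∧ W ≠ ⊥ ∧
    ∀ U : Submodule ℂ (Vtx D → ℂ), IsTMod D U → U ≤ W → U = ⊥ ∨ U = W

/-- The Hermitian inner product `⟨u,v⟩ = uᵗ · conj v` (linear in the first argument). -/
def inp {D : ℕ} (u v : Vtx D → ℂ) : ℂ := ∑ y, u y * (starRingEnd ℂ) (v y)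

/-!
The matrix `P` intertwines the adjacency and dual adjacency matrices: flipping coordinate `k`
of `z` multiplies `P_{yz}` by `(-1)^{y_k}`, and summing over `k` gives `P A = A* P`. Since `E_i`
and `E*_i` are the same Lagrange polynomial evaluated at `A` and at `A*`, also `P E_i = E*_i P`.

`P` factors as `K · diag(i^{wt z})` with `K_{yz} = (-i)^{∂(y,z)}`. The distance matrices are
polynomials in `A` by the three-term recurrence of the hypercube, and diagonal matrices depending
only on the weight are polynomials in `A*`; hence `P` lies in the Terwilliger algebra and maps
every `T`-module `W` into itself, and onto itself since `P³ = (2 - 2i)^D I`. Then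
`P E_i W = E*_i P W`, `P E*_i W = P E*_i P² W = (2 - 2i)^D Eᵉ_i W` and `P Eᵉ_i W = E_i P W`.
-/

open Polynomial

theorem SemiconjBy.aeval {R A : Type*} [CommSemiring R] [Semiring A] [Algebra R A]
    {p a b : A} (h : SemiconjBy p a b) (f : R[X]) : SemiconjBy p (aeval a f) (aeval b f) := by
  induction f using Polynomial.induction_on' with
  | add f g hf hg => simpa only [map_add] using hf.add_right hg
  | monomial n c =>
    simpa only [aeval_monomial] using
      SemiconjBy.mul_right (Algebra.commutes c p).symm (h.pow_right n)

namespace Matrix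

variable {ι m n p R : Type*} [CommSemiring R]

theorem aeval_diagonal [Fintype n] [DecidableEq n] (d : n → R) (f : R[X]) :
    aeval (diagonal d) f = diagonal fun i => f.eval (d i) := by
  rw [← diagonalAlgHom_apply R, aeval_algHom_apply, aeval_pi_apply]
  simp

def kroneckerPow (ι : Type*) [Fintype ι] (M : Matrix m n R) : Matrix (ι → m) (ι → n) R :=
  of fun y z => ∏ k, M (y k) (z k)

variable [Fintype ι]

theorem kroneckerPow_mul [DecidableEq ι] [Fintype n] (M : Matrix m n R) (N : Matrix n p R) :
    kroneckerPow ι M * kroneckerPow ι N = kroneckerPow ι (M * N) := by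
  ext y z
  simp only [kroneckerPow, mul_apply, of_apply, Finset.prod_univ_sum, Fintype.piFinset_univ,
    Finset.prod_mul_distrib]

theorem kroneckerPow_diagonal [DecidableEq m] (d : m → R) :
    kroneckerPow ι (diagonal d) = diagonal fun y => ∏ k, d (y k) := by
  ext y z
  by_cases h : y = z
  · subst h; simp [kroneckerPow]
  · obtain ⟨k, hk⟩ := Function.ne_iff.mp h
    simp [kroneckerPow, h, Finset.prod_eq_zero (Finset.mem_univ k), hk]

end Matrix

namespace Submodule

variable {n K V : Type*} [Fintype n]

def matrixStabilizer [DecidableEq n] {R : Type*} [CommSemiring R] (W : Submodule R (n → R)) :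
    Subalgebra R (Matrix n n R) where
  carrier := {M | ∀ w ∈ W, M *ᵥ w ∈ W}
  mul_mem' hM hN w hw := by rw [← mulVec_mulVec]; exact hM _ (hN w hw)
  add_mem' hM hN w hw := by rw [add_mulVec]; exact W.add_mem (hM w hw) (hN w hw)
  algebraMap_mem' c w hw := by
    rw [Algebra.algebraMap_eq_smul_one, smul_mulVec, one_mulVec]; exact W.smul_mem c hw

theorem map_mulVecLin_le_of_mem_matrixStabilizer [DecidableEq n] {R : Type*} [CommSemiring R]
    {W : Submodule R (n → R)} {M : Matrix n n R} (hM : M ∈ W.matrixStabilizer) :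
    W.map M.mulVecLin ≤ W := by
  rintro _ ⟨w, hw, rfl⟩; exact hM w hw

theorem map_mulVecLin_mul_of_map_eq {R : Type*} [CommSemiring R] {W : Submodule R (n → R)}
    {M : Matrix n n R} (N : Matrix n n R) (hM : W.map M.mulVecLin = W) :
    W.map (N * M).mulVecLin = W.map N.mulVecLin := by
  rw [mulVecLin_mul, map_comp, hM]

variable [Field K]

theorem map_mulVecLin_smul (W : Submodule K (n → K)) (M : Matrix n n K) {c : K} (hc : c ≠ 0) :
    W.map (c • M).mulVecLin = W.map M.mulVecLin := by
  rw [show (c • M).mulVecLin = c • M.mulVecLin from LinearMap.ext fun v => smul_mulVec c M v,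
    Submodule.map_smul _ _ _ hc]

theorem map_eq_self_of_injective [AddCommGroup V] [Module K V] [FiniteDimensional K V]
    {f : V →ₗ[K] V} (hf : Function.Injective f) {W : Submodule K V} (h : W.map f ≤ W) :
    W.map f = W :=
  eq_of_le_of_finrank_eq h (LinearEquiv.finrank_eq (W.equivMapOfInjective f hf)).symm

end Submodule

section Hypercube

variable {D : ℕ}

def flipAt (z : Vtx D) (k : Fin D) : Vtx D := Function.update z k (!z k)

theorem hammingDist_flipAt (y z : Vtx D) (k : Fin D) :
    (hammingDist y (flipAt z k) : ℤ) = hammingDist y z + if y k = z k then 1 else -1 := by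
  simp only [hammingDist, Finset.card_filter, ← Finset.add_sum_erase _ _ (Finset.mem_univ k)]
  rw [Finset.sum_congr rfl fun j hj => by
    rw [flipAt, Function.update_of_ne (Finset.ne_of_mem_erase hj)]]
  simp only [flipAt, Function.update_self]
  cases y k <;> cases z k <;> simp <;> ring

theorem eq_flipAt_iff (w z : Vtx D) (k : Fin D) :
    w = flipAt z k ↔ Finset.univ.filter (fun j => w j ≠ z j) = {k} := by
  simp only [Finset.eq_singleton_iff_unique_mem, Finset.mem_filter, Finset.mem_univ, true_and,
    funext_iff, flipAt, Function.update_apply]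
  constructor
  · intro h
    refine ⟨by simp [h], fun j hj => ?_⟩
    by_contra hjk
    simp [h j, hjk] at hj
  · rintro ⟨hk, hj⟩ j
    by_cases hjk : j = k
    · subst hjk; revert hk; cases w j <;> cases z j <;> simp
    · simpa [hjk] using mt (hj j) hjk

theorem adjMat_apply_eq_sum (w z : Vtx D) :
    adjMat D w z = ∑ k, if w = flipAt z k then 1 else 0 := by
  simp only [eq_flipAt_iff, adjMat]
  split_ifs with h
  · obtain ⟨a, ha⟩ := Finset.card_eq_one.mp h
    simp [ha]
  · refine (Finset.sum_eq_zero fun k _ => if_neg fun hk => h ?_).symm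
    rw [hk, Finset.card_singleton]

theorem mul_adjMat_apply (M : Matrix (Vtx D) (Vtx D) ℂ) (y z : Vtx D) :
    (M * adjMat D) y z = ∑ k, M y (flipAt z k) := by
  simp only [mul_apply, adjMat_apply_eq_sum, Finset.mul_sum, mul_ite, mul_one, mul_zero]
  rw [Finset.sum_comm]
  simp

theorem wt_mem_range (y : Vtx D) : wt y ∈ Finset.range (D + 1) :=
  Finset.mem_range_succ_iff.mpr (Finset.card_filter_le _ _ |>.trans_eq (Finset.card_fin D))

theorem theta_injective : Function.Injective (theta D) := by
  intro a b h
  simpa [theta] using h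

theorem sum_sign_eq_theta (y : Vtx D) : ∑ k, (if y k then -1 else 1 : ℂ) = theta D (wt y) := by
  have h (b : Bool) : (if b then -1 else 1 : ℂ) = 1 - 2 * if b then 1 else 0 := by
    cases b <;> norm_num
  simp only [h, Finset.sum_sub_distrib, ← Finset.mul_sum, Finset.sum_boole, theta, wt]
  simp

theorem Pmat_flipAt (y z : Vtx D) (k : Fin D) :
    Pmat D y (flipAt z k) = (if y k then -1 else 1) * Pmat D y z := by
  simp only [Pmat, flipAt, ← Finset.mul_prod_erase _ _ (Finset.mem_univ k), Function.update_self]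
  rw [Finset.prod_congr rfl fun j hj => by rw [Function.update_of_ne (Finset.ne_of_mem_erase hj)]]
  cases y k <;> cases z k <;> simp [P1]

theorem Pmat_semiconjBy : SemiconjBy (Pmat D) (adjMat D) (dualAdjMat D) := by
  ext y z
  simp only [mul_adjMat_apply, Pmat_flipAt, ← Finset.sum_mul, sum_sign_eq_theta, dualAdjMat,
    diagonal_mul]
  rfl

theorem aeval_dualAdjMat (f : ℂ[X]) :
    aeval (dualAdjMat D) f = diagonal fun y => f.eval (theta D (wt y)) :=
  aeval_diagonal _ f

theorem Emat_eq_aeval_basis (i : ℕ) :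
    Emat D i = aeval (adjMat D) (Lagrange.basis (Finset.range (D + 1)) (theta D) i) :=
  rfl

theorem EstarMat_eq_aeval_basis {i : ℕ} (hi : i ≤ D) :
    EstarMat D i
      = aeval (dualAdjMat D) (Lagrange.basis (Finset.range (D + 1)) (theta D) i) := by
  rw [aeval_dualAdjMat, EstarMat]
  congr! 2 with y
  split_ifs with h
  · rw [h, Lagrange.eval_basis_self theta_injective.injOn (Finset.mem_range_succ_iff.mpr hi)]
  · rw [Lagrange.eval_basis_of_ne (Ne.symm h) (wt_mem_range y)]

theorem Pmat_semiconjBy_Emat {i : ℕ} (hi : i ≤ D) :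
    SemiconjBy (Pmat D) (Emat D i) (EstarMat D i) := by
  rw [Emat_eq_aeval_basis, EstarMat_eq_aeval_basis hi]
  exact Pmat_semiconjBy.aeval _

def distMat (D m : ℕ) : Matrix (Vtx D) (Vtx D) ℂ :=
  of fun y z => if hammingDist y z = m then 1 else 0

theorem distMat_zero : distMat D 0 = 1 := by
  ext y z
  simp [distMat, one_apply, hammingDist_eq_zero]

theorem distMat_one : distMat D 1 = adjMat D := rfl

theorem distMat_succ_mul_adjMat (m : ℕ) :
    distMat D (m + 1) * adjMat D
      = ((m : ℂ) + 2) • distMat D (m + 2) + ((D : ℂ) - m) • distMat D m := by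
  ext y z
  have step (k : Fin D) : distMat D (m + 1) y (flipAt z k)
      = if y k = z k then distMat D m y z else distMat D (m + 2) y z := by
    have := hammingDist_flipAt y z k
    simp only [distMat, of_apply]
    split_ifs at this ⊢ <;> first | rfl | omega
  have hne : #(Finset.univ.filter fun k => ¬ y k = z k) = hammingDist y z := rfl
  have heq : (#(Finset.univ.filter fun k => y k = z k) : ℂ) = D - hammingDist y z := by
    rw [eq_sub_iff_add_eq, ← hne]
    exact_mod_cast (Finset.card_filter_add_card_filter_not _).trans (Finset.card_fin D)
  rw [mul_adjMat_apply, Finset.sum_congr rfl fun k _ => step k, Finset.sum_ite,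
    Finset.sum_const, Finset.sum_const, hne, nsmul_eq_mul, nsmul_eq_mul, heq]
  simp only [distMat, Matrix.add_apply, Matrix.smul_apply, of_apply, smul_eq_mul]
  split_ifs with h₁ h₂ h₂
  · omega
  · rw [h₁]; ring
  · rw [h₂]; push_cast; ring
  · ring

def terwilligerAlgebra (D : ℕ) : Subalgebra ℂ (Matrix (Vtx D) (Vtx D) ℂ) :=
  Algebra.adjoin ℂ {adjMat D, dualAdjMat D}

theorem distMat_mem_terwilligerAlgebra (m : ℕ) : distMat D m ∈ terwilligerAlgebra D := by
  have hA : adjMat D ∈ terwilligerAlgebra D := Algebra.subset_adjoin (Set.mem_insert _ _)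
  induction m using Nat.twoStepInduction with
  | zero => rw [distMat_zero]; exact one_mem _
  | one => rwa [distMat_one]
  | more m hm hm1 =>
    have hm2 : ((m : ℂ) + 2) ≠ 0 := by exact_mod_cast (m + 1).succ_ne_zero
    rw [← inv_smul_smul₀ hm2 (distMat D (m + 2)),
      eq_sub_of_add_eq (distMat_succ_mul_adjMat m).symm]
    exact Subalgebra.smul_mem _ (sub_mem (mul_mem hm1 hA) (Subalgebra.smul_mem _ hm _)) _

theorem of_hammingDist_mem_terwilligerAlgebra (f : ℕ → ℂ) :
    of (fun y z => f (hammingDist y z)) ∈ terwilligerAlgebra D := by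
  have hsum : of (fun y z => f (hammingDist y z))
      = ∑ m ∈ Finset.range (D + 1), f m • distMat D m := by
    ext y z
    have : ¬ D < hammingDist y z := not_lt.mpr <|
      hammingDist_le_card_fintype.trans_eq (Fintype.card_fin D)
    simp [distMat, Matrix.sum_apply, this]
  rw [hsum]
  exact sum_mem fun m _ => Subalgebra.smul_mem _ (distMat_mem_terwilligerAlgebra m) _

theorem diagonal_wt_mem_terwilligerAlgebra (f : ℕ → ℂ) :
    diagonal (fun y => f (wt y)) ∈ terwilligerAlgebra D := by
  have hinterp : diagonal (fun y => f (wt y))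
      = aeval (dualAdjMat D) (Lagrange.interpolate (Finset.range (D + 1)) (theta D) f) := by
    rw [aeval_dualAdjMat]
    congr! 2 with y
    rw [Lagrange.eval_interpolate_at_node _ theta_injective.injOn (wt_mem_range y)]
  have hsub : ({dualAdjMat D} : Set (Matrix (Vtx D) (Vtx D) ℂ)) ⊆ {adjMat D, dualAdjMat D} :=
    Set.singleton_subset_iff.mpr (Set.mem_insert_of_mem _ (Set.mem_singleton _))
  rw [hinterp]
  exact Algebra.adjoin_mono hsub (aeval_mem_adjoin_singleton _ _)

theorem Pmat_eq_mul_diagonal :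
    Pmat D
      = of (fun y z => (-Complex.I) ^ hammingDist y z) * diagonal fun z => Complex.I ^ wt z := by
  have hP1 (a b : Bool) :
      P1 a b = (if a = b then 1 else -Complex.I) * if b then Complex.I else 1 := by
    cases a <;> cases b <;> simp [P1]
  ext y z
  simp only [mul_diagonal, of_apply, Pmat, hP1, Finset.prod_mul_distrib, Finset.prod_ite,
    Finset.prod_const_one, Finset.prod_const, one_mul, mul_one]
  rfl

theorem Pmat_mem_terwilligerAlgebra : Pmat D ∈ terwilligerAlgebra D := by
  rw [Pmat_eq_mul_diagonal]
  exact mul_mem (of_hammingDist_mem_terwilligerAlgebra _) (diagonal_wt_mem_terwilligerAlgebra _)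

theorem IsTMod.terwilligerAlgebra_le {W : Submodule ℂ (Vtx D → ℂ)} (hW : IsTMod D W) :
    terwilligerAlgebra D ≤ W.matrixStabilizer :=
  Algebra.adjoin_le (Set.insert_subset_iff.mpr ⟨hW.1, Set.singleton_subset_iff.mpr hW.2⟩)

theorem Pmat_eq_kroneckerPow : Pmat D = kroneckerPow (Fin D) (of P1) := rfl

theorem Pmat_pow_three :
    Pmat D ^ 3 = (2 - 2 * Complex.I) ^ D • (1 : Matrix (Vtx D) (Vtx D) ℂ) := by
  have h : of P1 * of P1 * of P1 = diagonal fun _ => 2 - 2 * Complex.I := by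
    ext a b
    cases a <;> cases b <;> simp [P1, mul_apply] <;> ring_nf <;> simp only [Complex.I_sq] <;> ring
  rw [pow_three', Pmat_eq_kroneckerPow, kroneckerPow_mul, kroneckerPow_mul, h,
    kroneckerPow_diagonal]
  ext y z
  simp [one_apply, diagonal_apply]

theorem two_sub_two_mul_I_pow_ne_zero : (2 - 2 * Complex.I) ^ D ≠ 0 :=
  pow_ne_zero _ (by simp [sub_eq_zero, Complex.ext_iff])

theorem Pmat_mul_smul_sq : Pmat D * (((2 - 2 * Complex.I) ^ D)⁻¹ • Pmat D ^ 2) = 1 := by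
  rw [mul_smul_comm, ← pow_succ', Pmat_pow_three, smul_smul,
    inv_mul_cancel₀ two_sub_two_mul_I_pow_ne_zero, one_smul]

theorem Pmat_inv : (Pmat D)⁻¹ = ((2 - 2 * Complex.I) ^ D)⁻¹ • Pmat D ^ 2 :=
  inv_eq_right_inv Pmat_mul_smul_sq

theorem isUnit_det_Pmat : IsUnit (Pmat D).det :=
  isUnit_det_of_right_inverse Pmat_mul_smul_sq

theorem IsTMod.map_Pmat_eq {W : Submodule ℂ (Vtx D → ℂ)} (hW : IsTMod D W) :
    W.map (Pmat D).mulVecLin = W :=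
  Submodule.map_eq_self_of_injective
    (mulVec_injective_iff_isUnit.mpr ((isUnit_iff_isUnit_det _).mpr isUnit_det_Pmat))
    (Submodule.map_mulVecLin_le_of_mem_matrixStabilizer
      (hW.terwilligerAlgebra_le Pmat_mem_terwilligerAlgebra))

theorem Pmat_mul_EepsMat (i : ℕ) : Pmat D * EepsMat D i = Emat D i * Pmat D := by
  rw [EepsMat, ← mul_assoc, ← mul_assoc, mul_nonsing_inv _ isUnit_det_Pmat, one_mul]

theorem Pmat_mul_EstarMat_mul_sq {i : ℕ} (hi : i ≤ D) :
    Pmat D * EstarMat D i * Pmat D ^ 2 = (2 - 2 * Complex.I) ^ D • EepsMat D i := by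
  have hsq : Pmat D ^ 2 = (2 - 2 * Complex.I) ^ D • (Pmat D)⁻¹ := by
    rw [Pmat_inv, smul_smul, mul_inv_cancel₀ two_sub_two_mul_I_pow_ne_zero, one_smul]
  calc Pmat D * EstarMat D i * Pmat D ^ 2
      = Pmat D * (EstarMat D i * Pmat D) * Pmat D := by rw [sq]; simp only [mul_assoc]
    _ = Pmat D ^ 2 * Emat D i * Pmat D := by
        rw [← (Pmat_semiconjBy_Emat hi).eq, sq]; simp only [mul_assoc]
    _ = (2 - 2 * Complex.I) ^ D • EepsMat D i := by
        rw [hsq, smul_mul_assoc, smul_mul_assoc, EepsMat, mul_assoc]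

end Hypercube

theorem P_cyclic_on_idempotent_images_general (D : ℕ)
    (W : Submodule ℂ (Vtx D → ℂ)) (hW : IsIrredTMod D W) (i : ℕ) (hi : i ≤ D) :
    Submodule.map (Pmat D).mulVecLin (Submodule.map (Emat D i).mulVecLin W)
      = Submodule.map (EstarMat D i).mulVecLin W ∧
    Submodule.map (Pmat D).mulVecLin (Submodule.map (EstarMat D i).mulVecLin W)
      = Submodule.map (EepsMat D i).mulVecLin W ∧
    Submodule.map (Pmat D).mulVecLin (Submodule.map (EepsMat D i).mulVecLin W)
      = Submodule.map (Emat D i).mulVecLin W := by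
  have hPW := hW.1.map_Pmat_eq
  have hP2W : W.map (Pmat D ^ 2).mulVecLin = W := by
    rw [sq, mulVecLin_mul, Submodule.map_comp, hPW, hPW]
  simp only [← Submodule.map_comp, ← mulVecLin_mul]
  refine ⟨?_, ?_, ?_⟩
  · rw [(Pmat_semiconjBy_Emat hi).eq, Submodule.map_mulVecLin_mul_of_map_eq _ hPW]
  · rw [← Submodule.map_mulVecLin_mul_of_map_eq _ hP2W, Pmat_mul_EstarMat_mul_sq hi]
    exact Submodule.map_mulVecLin_smul _ _ two_sub_two_mul_I_pow_ne_zero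
  · rw [Pmat_mul_EepsMat, Submodule.map_mulVecLin_mul_of_map_eq _ hPW]

/-- For an irreducible `T`-module `W` and `0 ≤ i ≤ D`:
`P(E_i W) = E*_i W`, `P(E*_i W) = Eᵉ_i W`, `P(Eᵉ_i W) = E_i W`. -/
theorem P_cyclic_on_idempotent_images (D : ℕ) (hD : 0 < D)
    (W : Submodule ℂ (Vtx D → ℂ)) (hW : IsIrredTMod D W) (i : ℕ) (hi : i ≤ D) :
    Submodule.map (Pmat D).mulVecLin (Submodule.map (Emat D i).mulVecLin W)
      = Submodule.map (EstarMat D i).mulVecLin W ∧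
    Submodule.map (Pmat D).mulVecLin (Submodule.map (EstarMat D i).mulVecLin W)
      = Submodule.map (EepsMat D i).mulVecLin W ∧
    Submodule.map (Pmat D).mulVecLin (Submodule.map (EepsMat D i).mulVecLin W)
      = Submodule.map (Emat D i).mulVecLin W :=
  P_cyclic_on_idempotent_images_general D W hW i hi
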